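/- Let E be a finite type and f : Finset E → ℝ a set function with f(∅) = 0 that is nonnegative, monotone (S ⊆ T implies f(S) ≤ f(T)), and submodular (for all S ⊆ T and s ∈ E, f(S ∪ {s}) − f(S) ≥ f(T ∪ {s}) − f(T)). Define the greedy sequence S₀ = ∅ and S_{i+1} = S_i ∪ {s_i}, where s_i ∈ E maximizes the marginal gain f(S_i ∪ {s}) − f(S_i) over all s ∈ E. Then for every K ≥ 1, f(S_K) ≥ (1 − (1 − 1/K)^K) · max{f(T) : T ⊆ E, |T| = K} ≥ (1 − 1/e) · max{f(T) : T ⊆ E, |T| = K}, i.e. the best-first greedy algorithm achieves a (1 − 1/e) approximation of the optimal size-K seed set. -/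
import Mathlib

/-- Submodular functions are subadditive over marginal gains. -/
lemma submod_sum_bound {E : Type*} [DecidableEq E] (f : Finset E → ℝ)
    (hsubmod : ∀ S T : Finset E, S ⊆ T → ∀ s : E,
      f (insert s T) - f T ≤ f (insert s S) - f S)
    (A T : Finset E) :
    f (A ∪ T) - f A ≤ ∑ t ∈ T, (f (insert t A) - f A) := by
  classical
  induction T using Finset.induction_on with
  | empty => simp
  | @insert t T ht ih =>
    rw [Finset.sum_insert ht, Finset.union_insert]
    have h1 : f (insert t (A ∪ T)) - f (A ∪ T) ≤ f (insert t A) - f A :=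
      hsubmod A (A ∪ T) Finset.subset_union_left t
    linarith

/-- The best-first greedy algorithm on a nonnegative, monotone, submodular set
function with `f ∅ = 0` achieves, after `K ≥ 1` steps,
`f(S_K) ≥ (1 − (1 − 1/K)^K) · max{f(T) : |T| = K} ≥ (1 − 1/e) · max{f(T) : |T| = K}`. -/
theorem greedy_approximation {E : Type*} [Fintype E] [DecidableEq E]
    (f : Finset E → ℝ)
    (hempty : f ∅ = 0)
    (hnonneg : ∀ S : Finset E, 0 ≤ f S)
    (hmono : ∀ S T : Finset E, S ⊆ T → f S ≤ f T)
    (hsubmod : ∀ S T : Finset E, S ⊆ T → ∀ s : E,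
      f (insert s T) - f T ≤ f (insert s S) - f S)
    (s : ℕ → E) (S : ℕ → Finset E)
    (hS0 : S 0 = ∅)
    (hSsucc : ∀ i, S (i + 1) = insert (s i) (S i))
    (hgreedy : ∀ i, ∀ t : E,
      f (insert t (S i)) - f (S i) ≤ f (insert (s i) (S i)) - f (S i))
    (K : ℕ) (hK : 1 ≤ K) :
    f (S K) ≥ (1 - (1 - 1 / (K : ℝ)) ^ K) *
        sSup {x : ℝ | ∃ T : Finset E, T.card = K ∧ f T = x} ∧
    (1 - (1 - 1 / (K : ℝ)) ^ K) *
        sSup {x : ℝ | ∃ T : Finset E, T.card = K ∧ f T = x} ≥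
      (1 - 1 / Real.exp 1) *
        sSup {x : ℝ | ∃ T : Finset E, T.card = K ∧ f T = x} := by
  classical
  have hKpos : (0:ℝ) < K := by exact_mod_cast Nat.lt_of_lt_of_le Nat.zero_lt_one hK
  have hKinv : 1 / (K:ℝ) ≤ 1 := by
    rw [div_le_one hKpos]; exact_mod_cast hK
  have hb0 : (0:ℝ) ≤ 1 - 1 / (K:ℝ) := by linarith
  have hb1 : (1:ℝ) - 1 / (K:ℝ) < 1 := by
    have : 0 < 1 / (K:ℝ) := by positivity
    linarith
  set c : ℝ := 1 - (1 - 1 / (K:ℝ)) ^ K with hc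
  have hplt : (1 - 1 / (K:ℝ)) ^ K < 1 := pow_lt_one₀ hb0 hb1 (by omega)
  have hcpos : 0 < c := by rw [hc]; linarith
  -- the set of values is finite
  have hsetfin : {x : ℝ | ∃ T : Finset E, T.card = K ∧ f T = x}.Finite := by
    have : {x : ℝ | ∃ T : Finset E, T.card = K ∧ f T = x}
        = f '' {T : Finset E | T.card = K} := by
      ext x
      simp only [Set.mem_setOf_eq, Set.mem_image]
    rw [this]
    exact (Set.toFinite _).image f
  set M : ℝ := sSup {x : ℝ | ∃ T : Finset E, T.card = K ∧ f T = x} with hM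
  -- key per-optimal-set bound
  have hkey : ∀ T : Finset E, T.card = K → c * f T ≤ f (S K) := by
    intro T hT
    have hstep : ∀ i : ℕ, f T - f (S (i+1)) ≤ (1 - 1/(K:ℝ)) * (f T - f (S i)) := by
      intro i
      have h1 : f T ≤ f (S i ∪ T) := hmono _ _ Finset.subset_union_right
      have h2 := submod_sum_bound f hsubmod (S i) T
      have h3 : ∑ t ∈ T, (f (insert t (S i)) - f (S i))
          ≤ ∑ _t ∈ T, (f (S (i+1)) - f (S i)) := by
        apply Finset.sum_le_sum
        intro t _
        have := hgreedy i t
        rw [hSsucc i]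
        linarith
      rw [Finset.sum_const, hT, nsmul_eq_mul] at h3
      have h4 : f T - f (S i) ≤ (K:ℝ) * (f (S (i+1)) - f (S i)) := by linarith
      have h5 : (f T - f (S i)) / (K:ℝ) ≤ f (S (i+1)) - f (S i) := by
        rw [div_le_iff₀ hKpos]; linarith [mul_comm ((K:ℝ)) (f (S (i+1)) - f (S i))]
      have hexp : (1 - 1/(K:ℝ)) * (f T - f (S i))
          = (f T - f (S i)) - (f T - f (S i)) / (K:ℝ) := by ring
      rw [hexp]; linarith
    have hind : ∀ n : ℕ, f T - f (S n) ≤ (1 - 1/(K:ℝ))^n * f T := by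
      intro n
      induction n with
      | zero => simp [hS0, hempty]
      | succ n ih =>
        calc f T - f (S (n+1)) ≤ (1 - 1/(K:ℝ)) * (f T - f (S n)) := hstep n
          _ ≤ (1 - 1/(K:ℝ)) * ((1 - 1/(K:ℝ))^n * f T) :=
              mul_le_mul_of_nonneg_left ih hb0
          _ = (1 - 1/(K:ℝ))^(n+1) * f T := by ring
    have := hind K
    have h6 : (1 - (1 - 1/(K:ℝ))^K) * f T = f T - (1 - 1/(K:ℝ))^K * f T := by ring
    rw [hc, h6]
    linarith
  -- M is nonnegative and bounded by f (S K) / c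
  have hMnonneg : 0 ≤ M := by
    rcases Set.eq_empty_or_nonempty {x : ℝ | ∃ T : Finset E, T.card = K ∧ f T = x} with h | h
    · rw [hM, h, Real.sSup_empty]
    · obtain ⟨x, hx⟩ := h
      obtain ⟨T, hT, hfT⟩ := hx
      have : x ≤ M := le_csSup hsetfin.bddAbove ⟨T, hT, hfT⟩
      have : 0 ≤ x := hfT ▸ hnonneg T
      linarith [le_csSup hsetfin.bddAbove (⟨T, hT, hfT⟩ :
        x ∈ {x : ℝ | ∃ T : Finset E, T.card = K ∧ f T = x})]
  have hMle : M ≤ f (S K) / c := by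
    apply Real.sSup_le
    · rintro x ⟨T, hT, rfl⟩
      rw [le_div_iff₀ hcpos, mul_comm]
      exact hkey T hT
    · exact div_nonneg (hnonneg _) hcpos.le
  have hfirst : c * M ≤ f (S K) := by
    calc c * M ≤ c * (f (S K) / c) := mul_le_mul_of_nonneg_left hMle hcpos.le
      _ = f (S K) := by field_simp
  constructor
  · exact hfirst
  · -- (1 - 1/K)^K ≤ 1/e
    have h1 : 1 - 1/(K:ℝ) ≤ Real.exp (-(1/(K:ℝ))) := by
      have := Real.add_one_le_exp (-(1/(K:ℝ)))
      linarith
    have h2 : (1 - 1/(K:ℝ))^K ≤ Real.exp (-(1/(K:ℝ)))^K :=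
      pow_le_pow_left₀ hb0 h1 K
    have h3 : Real.exp (-(1/(K:ℝ)))^K = Real.exp (-1) := by
      rw [← Real.exp_nat_mul]
      congr 1
      field_simp
    have h4 : (1 - 1/(K:ℝ))^K ≤ 1 / Real.exp 1 := by
      have he : (1:ℝ) / Real.exp 1 = Real.exp (-1) := by
        rw [Real.exp_neg, one_div]
      rw [he]
      exact h2.trans h3.le
    have hcge : 1 - 1 / Real.exp 1 ≤ c := by rw [hc]; linarith
    exact mul_le_mul_of_nonneg_right hcge hMnonneg
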